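/- arXiv:1509.06276 — 2 statements merged into one kernel-verified Lean document; each statement's English description precedes it below -/
import Mathlib

section
/- An ordered GIFS (A,Γ,G,≺) is a linear GIFS if and only if it satisfies the chain condition. -/
open MeasureTheory Set

noncomputable section

/-- A graph-directed iterated function system (GIFS) with vertex set `Fin N`,
a finite edge set, and a contracting similitude of ratio `r e ∈ (0,1)` for each edge. -/
structure GIFS (X : Type) [MetricSpace X] (N : ℕ) where
  Edge : Type
  fintypeEdge : Fintype Edge
  src : Edge → Fin N
  tgt : Edge → Fin N
  r : Edge → ℝ
  r_pos : ∀ e, 0 < r e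
  r_lt_one : ∀ e, r e < 1
  g : Edge → X → X
  g_sim : ∀ e x y, dist (g e x) (g e y) = r e * dist x y

attribute [instance] GIFS.fintypeEdge

/-- The finite prefix of length `n` of an infinite word. -/
def prefixList {α : Type} (ω : ℕ → α) (n : ℕ) : List α := List.ofFn fun k : Fin n => ω k

/-- Spectral radius of a real square matrix: supremum of the moduli of its
complex eigenvalues. -/
def specRad {n : ℕ} (A : Matrix (Fin n) (Fin n) ℝ) : ℝ :=
  sSup ((fun z => ‖z‖) '' spectrum ℂ (A.map Complex.ofReal))

namespace GIFS

variable {X : Type} [MetricSpace X] {N : ℕ}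

/-- `γ` is a finite path (possibly empty) starting from the vertex `i`. -/
def IsPathFrom (G : GIFS X N) (i : Fin N) (γ : List G.Edge) : Prop :=
  γ.Chain' (fun a b => G.tgt a = G.src b) ∧ ∀ e ∈ γ.head?, G.src e = i

/-- The terminal vertex of a finite path starting at `i`. -/
def pathTgt (G : GIFS X N) (i : Fin N) (γ : List G.Edge) : Fin N :=
  (γ.getLast?).elim i G.tgt

/-- The composition `g_{γ₁} ∘ ⋯ ∘ g_{γ_n}` along a finite path. -/
def pathMap (G : GIFS X N) (γ : List G.Edge) : X → X :=
  γ.foldr (fun e f => G.g e ∘ f) id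

/-- The cylinder set `E_γ = g_{γ₁} ∘ ⋯ ∘ g_{γ_n} (E_{t(γ)})` of a finite path from `i`. -/
def pathSet (G : GIFS X N) (E : Fin N → Set X) (i : Fin N) (γ : List G.Edge) : Set X :=
  G.pathMap γ '' E (G.pathTgt i γ)

/-- `E` is the family of invariant sets of the GIFS: nonempty compact sets
satisfying the set equations. -/
def IsInvariant (G : GIFS X N) (E : Fin N → Set X) : Prop :=
  (∀ i, (E i).Nonempty) ∧ (∀ i, IsCompact (E i)) ∧
    ∀ i, E i = ⋃ e ∈ {e : G.Edge | G.src e = i}, G.g e '' E (G.tgt e)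

/-- The open set condition witnessed by a given family of open sets. -/
def OSCWith (G : GIFS X N) (U : Fin N → Set X) : Prop :=
  (∀ i, (U i).Nonempty ∧ IsOpen (U i)) ∧
  (∀ e : G.Edge, G.g e '' U (G.tgt e) ⊆ U (G.src e)) ∧
  ∀ e f : G.Edge, e ≠ f → G.src e = G.src f →
    Disjoint (G.g e '' U (G.tgt e)) (G.g f '' U (G.tgt f))

/-- The open set condition. -/
def OSC (G : GIFS X N) : Prop := ∃ U, G.OSCWith U

/-- The base graph is strongly connected. -/
def StronglyConnected (G : GIFS X N) : Prop :=
  ∀ i j : Fin N, ∃ γ : List G.Edge, γ ≠ [] ∧ G.IsPathFrom i γ ∧ G.pathTgt i γ = j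

/-- The matrix `M(t)` with entries `M(t)_{ij} = ∑_{e ∈ Γ_{ij}} r_e ^ t`. -/
def M (G : GIFS X N) (t : ℝ) : Matrix (Fin N) (Fin N) ℝ :=
  Matrix.of fun i j => ∑ e : G.Edge, if G.src e = i ∧ G.tgt e = j then G.r e ^ t else 0

/-- `δ` is the similarity dimension: the (unique) positive real with `ρ(M(δ)) = 1`. -/
def IsSimDim (G : GIFS X N) (δ : ℝ) : Prop := 0 < δ ∧ specRad (G.M δ) = 1

/-- The space of infinite paths emanating from the vertex `i`. -/
def InfPath (G : GIFS X N) (i : Fin N) : Type :=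
  {ω : ℕ → G.Edge // G.src (ω 0) = i ∧ ∀ n, G.tgt (ω n) = G.src (ω (n + 1))}

instance (G : GIFS X N) : MeasurableSpace G.Edge := ⊤

instance (G : GIFS X N) (i : Fin N) : MeasurableSpace (G.InfPath i) :=
  MeasurableSpace.comap Subtype.val MeasurableSpace.pi

/-- `π` is the symbolic projection `Γ_i^∞ → E_i` : the image of an infinite path
belongs to every cylinder set of its finite prefixes. -/
def IsCoding (G : GIFS X N) (E : Fin N → Set X) (i : Fin N) (π : G.InfPath i → X) : Prop :=
  ∀ (ω : G.InfPath i) (n : ℕ), π ω ∈ G.pathSet E i (prefixList ω.1 n)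

end GIFS

/-- An ordered GIFS: a GIFS with a partial order on the edges which restricts to
a linear order on each `Γ_i` (edges emanating from `i`), edges emanating from
distinct vertices being incomparable. -/
structure OGIFS (X : Type) [MetricSpace X] (N : ℕ) extends GIFS X N where
  elt : Edge → Edge → Prop
  elt_src : ∀ {a b}, elt a b → src a = src b
  elt_irrefl : ∀ a, ¬ elt a a
  elt_trans : ∀ {a b c}, elt a b → elt b c → elt a c
  elt_total : ∀ a b, src a = src b → elt a b ∨ a = b ∨ elt b a

namespace OGIFS

variable {X : Type} [MetricSpace X] {N : ℕ}

/-- The induced dictionary order on finite paths. -/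
def PathLt (G : OGIFS X N) (γ ω : List G.Edge) : Prop := List.Lex G.elt γ ω

/-- Two adjacent edges in some `Γ_i`: consecutive in the order `≺`. -/
def AdjacentEdges (G : OGIFS X N) (e f : G.Edge) : Prop :=
  G.elt e f ∧ ¬ ∃ e', G.elt e e' ∧ G.elt e' f

/-- Two same-length paths from `i`, adjacent (consecutive) in the dictionary order. -/
def Adjacent (G : OGIFS X N) (i : Fin N) (γ ω : List G.Edge) : Prop :=
  G.toGIFS.IsPathFrom i γ ∧ G.toGIFS.IsPathFrom i ω ∧ γ.length = ω.length ∧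
  G.PathLt γ ω ∧
  ¬ ∃ η : List G.Edge, G.toGIFS.IsPathFrom i η ∧ η.length = γ.length ∧
      G.PathLt γ η ∧ G.PathLt η ω

/-- A linear GIFS: every two adjacent cylinders of invariant sets intersect. -/
def IsLinear (G : OGIFS X N) (E : Fin N → Set X) : Prop :=
  ∀ (i : Fin N) (γ ω : List G.Edge), G.Adjacent i γ ω →
    (G.toGIFS.pathSet E i γ ∩ G.toGIFS.pathSet E i ω).Nonempty

/-- An infinite path from `i` is lowest if all its finite prefixes are lowest in the
dictionary order among same-length paths from `i`. -/
def IsLowest (G : OGIFS X N) (i : Fin N) (ω : G.toGIFS.InfPath i) : Prop :=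
  ∀ (n : ℕ) (γ : List G.Edge), G.toGIFS.IsPathFrom i γ → γ.length = n →
    γ = prefixList ω.1 n ∨ G.PathLt (prefixList ω.1 n) γ

/-- An infinite path from `i` is highest if all its finite prefixes are highest. -/
def IsHighest (G : OGIFS X N) (i : Fin N) (ω : G.toGIFS.InfPath i) : Prop :=
  ∀ (n : ℕ) (γ : List G.Edge), G.toGIFS.IsPathFrom i γ → γ.length = n →
    γ = prefixList ω.1 n ∨ G.PathLt γ (prefixList ω.1 n)

/-- `a` is the head of `E_i`: the projection of the lowest infinite path from `i`. -/
def IsHead (G : OGIFS X N) (E : Fin N → Set X) (i : Fin N) (a : X) : Prop :=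
  ∃ ω : G.toGIFS.InfPath i, G.IsLowest i ω ∧
    ∀ n : ℕ, a ∈ G.toGIFS.pathSet E i (prefixList ω.1 n)

/-- `a` is the tail of `E_i`: the projection of the highest infinite path from `i`. -/
def IsTail (G : OGIFS X N) (E : Fin N → Set X) (i : Fin N) (a : X) : Prop :=
  ∃ ω : G.toGIFS.InfPath i, G.IsHighest i ω ∧
    ∀ n : ℕ, a ∈ G.toGIFS.pathSet E i (prefixList ω.1 n)

/-- The chain condition: for adjacent edges `e ≺ f` emanating from a common vertex,
`g_e(tail of E_{t(e)}) = g_f(head of E_{t(f)})`. -/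
def ChainCondition (G : OGIFS X N) (E : Fin N → Set X) : Prop :=
  ∀ e f : G.Edge, G.AdjacentEdges e f →
    ∀ b a : X, G.IsTail E (G.tgt e) b → G.IsHead E (G.tgt f) a → G.g e b = G.g f a

open Classical in
/-- Translation part of the maps of the measure-recording GIFS:
`b_e = ∑_{e' ≺ e} h_{t(e')} r_{e'}^δ`. -/
def bCoef (G : OGIFS X N) (δ : ℝ) (h : Fin N → ℝ) (e : G.Edge) : ℝ :=
  ∑ e' : G.Edge, if G.elt e' e then h (G.tgt e') * G.r e' ^ δ else 0

/-- The maps `f_e (x) = r_e^δ x + b_e` of the measure-recording GIFS. -/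
def fmap (G : OGIFS X N) (δ : ℝ) (h : Fin N → ℝ) (e : G.Edge) : ℝ → ℝ :=
  fun x => G.r e ^ δ * x + G.bCoef δ h e

/-- Composition of the measure-recording maps along a finite path. -/
def fPathMap (G : OGIFS X N) (δ : ℝ) (h : Fin N → ℝ) (γ : List G.Edge) : ℝ → ℝ :=
  γ.foldr (fun e f => G.fmap δ h e ∘ f) id

/-- Cylinder intervals `F_γ` of the measure-recording GIFS (with `F_i = [0, h_i]`). -/
def fPathSet (G : OGIFS X N) (δ : ℝ) (h : Fin N → ℝ) (i : Fin N) (γ : List G.Edge) : Set ℝ :=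
  G.fPathMap δ h γ '' Icc 0 (h (G.toGIFS.pathTgt i γ))

/-- `ρ` is the symbolic projection `Γ_i^∞ → F_i` of the measure-recording GIFS. -/
def IsFCoding (G : OGIFS X N) (δ : ℝ) (h : Fin N → ℝ) (i : Fin N)
    (ρ : G.toGIFS.InfPath i → ℝ) : Prop :=
  ∀ (ω : G.toGIFS.InfPath i) (n : ℕ), ρ ω ∈ G.fPathSet δ h i (prefixList ω.1 n)

end OGIFS

/-- An optimal parametrization of an `s`-set `K`: a surjection `[0,1] → K` which is
almost one-to-one, measure-preserving and `1/s`-Hölder continuous. -/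
def OptimalParam {X : Type} [MetricSpace X] [MeasurableSpace X] [BorelSpace X]
    (s : ℝ) (K : Set X) (ψ : ℝ → X) : Prop :=
  ψ '' Icc (0:ℝ) 1 = K ∧
  (∃ K' ⊆ K, ∃ I' ⊆ Icc (0:ℝ) 1,
      μH[s] (K \ K') = 0 ∧ volume (Icc (0:ℝ) 1 \ I') = 0 ∧ BijOn ψ I' K') ∧
  (∀ F : Set ℝ, F ⊆ Icc (0:ℝ) 1 → MeasurableSet F →
      μH[s] (ψ '' F) = μH[s] K * volume F) ∧
  (∀ B : Set X, B ⊆ K → MeasurableSet B →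
      volume (ψ ⁻¹' B ∩ Icc (0:ℝ) 1) = (μH[s] K)⁻¹ * μH[s] B) ∧
  ∃ c' : NNReal, 0 < c' ∧ HolderOnWith c' (Real.toNNReal (1 / s)) ψ (Icc (0:ℝ) 1)

end

/-!
Two adjacent paths of the same length split as `η e γ` and `η f ω`, where `e ≺ f` are adjacent
edges, `γ` is the highest path of its length from `t(e)` and `ω` the lowest one from `t(f)`.
The tail of `E_{t(e)}` lies in `E_γ` and the head of `E_{t(f)}` in `E_ω`, so under the chain
condition `g_η g_e (tail) = g_η g_f (head)` is a common point of `E_{ηeγ}` and `E_{ηfω}`.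
Conversely, for adjacent edges `e ≺ f`, prolonging `e` by the first `n` edges of the highest
infinite path from `t(e)` and `f` by those of the lowest one from `t(f)` gives adjacent paths whose
cylinders contain `g_e (tail)` and `g_f (head)`. Under linearity these cylinders meet, and their
diameters shrink geometrically, so `g_e (tail) = g_f (head)`.
Tails and heads exist: leaving each vertex along its largest (smallest) edge gives the highest
(lowest) infinite path, and the nested compact cylinders along it have a common point.
-/

open Filter Topology

namespace List

variable {α : Type*} {r : α → α → Prop} {l₁ l₂ : List α}

theorem Lex.exists_eq_append_cons_of_length_eq (h : Lex r l₁ l₂)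
    (hlen : l₁.length = l₂.length) :
    ∃ η a b l₁' l₂', l₁ = η ++ a :: l₁' ∧ l₂ = η ++ b :: l₂' ∧ r a b ∧
      l₁'.length = l₂'.length := by
  induction h with
  | nil => simp at hlen
  | @rel a l₁ b l₂ hab => exact ⟨[], a, b, l₁, l₂, rfl, rfl, hab, by simpa using hlen⟩
  | @cons a l₁ l₂ _ ih =>
    obtain ⟨η, a', b', l₁', l₂', rfl, rfl, hab, hlen'⟩ := ih (by simpa using hlen)
    exact ⟨a :: η, a', b', l₁', l₂', rfl, rfl, hab, hlen'⟩

theorem Lex.of_swap_of_length_eq (h : Lex (Function.swap r) l₁ l₂)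
    (hlen : l₁.length = l₂.length) : Lex r l₂ l₁ := by
  induction h with
  | nil => simp at hlen
  | rel hab => exact .rel hab
  | cons _ ih => exact .cons (ih (by simpa using hlen))

end List

section PrefixList

variable {α : Type} (ω : ℕ → α) (n : ℕ)

theorem prefixList_succ : prefixList ω (n + 1) = ω 0 :: prefixList (fun k => ω (k + 1)) n :=
  List.ofFn_succ

theorem prefixList_succ' : prefixList ω (n + 1) = prefixList ω n ++ [ω n] := by
  rw [prefixList, prefixList, List.ofFn_succ', List.concat_eq_append]
  rfl

theorem length_prefixList : (prefixList ω n).length = n := by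
  simp [prefixList]

end PrefixList

namespace GIFS

variable {X : Type} [MetricSpace X] {N : ℕ} (G : GIFS X N)

section Paths

theorem isPathFrom_nil (i : Fin N) : G.IsPathFrom i [] :=
  ⟨List.isChain_nil, by simp⟩

theorem isPathFrom_iff {i : Fin N} {γ : List G.Edge} :
    G.IsPathFrom i γ ↔ γ.IsChain (fun a b => G.tgt a = G.src b) ∧ ∀ e ∈ γ.head?, G.src e = i :=
  Iff.rfl

theorem isPathFrom_cons {i : Fin N} {a : G.Edge} {l : List G.Edge} :
    G.IsPathFrom i (a :: l) ↔ G.src a = i ∧ G.IsPathFrom (G.tgt a) l := by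
  rw [isPathFrom_iff, isPathFrom_iff, List.isChain_cons]
  simp only [List.head?_cons, Option.mem_def, Option.some.injEq, forall_eq',
    eq_comm (a := G.tgt a)]
  tauto

theorem pathTgt_append (i : Fin N) (γ δ : List G.Edge) :
    G.pathTgt i (γ ++ δ) = G.pathTgt (G.pathTgt i γ) δ := by
  unfold pathTgt
  rw [List.getLast?_append]
  cases δ.getLast? <;> rfl

theorem pathTgt_cons (i : Fin N) (a : G.Edge) (l : List G.Edge) :
    G.pathTgt i (a :: l) = G.pathTgt (G.tgt a) l :=
  G.pathTgt_append i [a] l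

theorem isPathFrom_append {i : Fin N} {γ δ : List G.Edge} :
    G.IsPathFrom i (γ ++ δ) ↔ G.IsPathFrom i γ ∧ G.IsPathFrom (G.pathTgt i γ) δ := by
  induction γ generalizing i with
  | nil => exact ⟨fun h => ⟨G.isPathFrom_nil i, h⟩, And.right⟩
  | cons a γ ih =>
    rw [List.cons_append, G.isPathFrom_cons, ih, G.isPathFrom_cons, G.pathTgt_cons, and_assoc]

theorem pathMap_append (γ δ : List G.Edge) : G.pathMap (γ ++ δ) = G.pathMap γ ∘ G.pathMap δ := by
  induction γ with
  | nil => rfl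
  | cons a γ ih => exact congrArg (G.g a ∘ ·) ih

theorem pathSet_cons (E : Fin N → Set X) (i : Fin N) (a : G.Edge) (γ : List G.Edge) :
    G.pathSet E i (a :: γ) = G.g a '' G.pathSet E (G.tgt a) γ := by
  rw [pathSet, pathSet, pathTgt_cons, image_image]
  rfl

theorem pathSet_append (E : Fin N → Set X) (i : Fin N) (γ δ : List G.Edge) :
    G.pathSet E i (γ ++ δ) = G.pathMap γ '' G.pathSet E (G.pathTgt i γ) δ := by
  rw [pathSet, pathSet, pathTgt_append, pathMap_append, image_comp]

theorem continuous_pathMap (γ : List G.Edge) : Continuous (G.pathMap γ) := by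
  induction γ with
  | nil => exact continuous_id
  | cons a γ ih =>
    exact (LipschitzWith.of_dist_le_mul (K := ⟨G.r a, (G.r_pos a).le⟩)
      fun x y => (G.g_sim a x y).le).continuous.comp ih

theorem dist_pathMap_le {R : ℝ} (hr : ∀ e, G.r e ≤ R) (γ : List G.Edge) (x y : X) :
    dist (G.pathMap γ x) (G.pathMap γ y) ≤ R ^ γ.length * dist x y := by
  induction γ with
  | nil => simp [pathMap]
  | cons a γ ih =>
    calc dist (G.g a (G.pathMap γ x)) (G.g a (G.pathMap γ y))
        = G.r a * dist (G.pathMap γ x) (G.pathMap γ y) := G.g_sim a _ _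
      _ ≤ R * (R ^ γ.length * dist x y) :=
        mul_le_mul (hr a) ih dist_nonneg ((G.r_pos a).le.trans (hr a))
      _ = R ^ (a :: γ).length * dist x y := by rw [List.length_cons, pow_succ']; ring

theorem isPathFrom_prefixList {i : Fin N} {ω : ℕ → G.Edge} (h0 : G.src (ω 0) = i)
    (hω : ∀ k, G.tgt (ω k) = G.src (ω (k + 1))) (n : ℕ) : G.IsPathFrom i (prefixList ω n) := by
  induction n generalizing i ω with
  | zero => exact G.isPathFrom_nil i
  | succ n ih =>
    rw [prefixList_succ, G.isPathFrom_cons]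
    exact ⟨h0, ih (hω 0).symm fun k => hω (k + 1)⟩

theorem exists_isPathFrom_length (hsrc : ∀ j, ∃ e, G.src e = j) (j : Fin N) (m : ℕ) :
    ∃ δ, G.IsPathFrom j δ ∧ δ.length = m := by
  induction m generalizing j with
  | zero => exact ⟨[], G.isPathFrom_nil j, rfl⟩
  | succ m ih =>
    obtain ⟨e, he⟩ := hsrc j
    obtain ⟨δ, hδ, rfl⟩ := ih (G.tgt e)
    exact ⟨e :: δ, G.isPathFrom_cons.2 ⟨he, hδ⟩, rfl⟩

end Paths

section Greedy

theorem exists_forall_eq_or_rel (r : G.Edge → G.Edge → Prop) [IsStrictOrder G.Edge r]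
    (htot : ∀ a b, G.src a = G.src b → r a b ∨ a = b ∨ r b a) (hsrc : ∀ j, ∃ e, G.src e = j) :
    ∃ sel : Fin N → G.Edge, (∀ j, G.src (sel j) = j) ∧
      ∀ e, e = sel (G.src e) ∨ r (sel (G.src e)) e := by
  have hmin : ∀ j, ∃ m, G.src m = j ∧ ∀ e, G.src e = j → e = m ∨ r m e := by
    intro j
    obtain ⟨m, hm, hmin⟩ :=
      (Finite.wellFounded_of_trans_of_irrefl r).has_min {e | G.src e = j} (hsrc j)
    refine ⟨m, hm, fun e he => ?_⟩
    rcases htot e m (he.trans hm.symm) with h | h | h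
    · exact absurd h (hmin e he)
    · exact .inl h
    · exact .inr h
  choose sel hsel hmin using hmin
  exact ⟨sel, hsel, fun e => hmin _ e rfl⟩

def greedyPath (sel : Fin N → G.Edge) (hsel : ∀ j, G.src (sel j) = j) (j : Fin N) :
    G.InfPath j :=
  ⟨fun n => sel ((fun k => G.tgt (sel k))^[n] j), hsel j, fun n => by
    rw [hsel, Function.iterate_succ_apply']⟩

variable {G} {sel : Fin N → G.Edge} {hsel : ∀ j, G.src (sel j) = j}

theorem prefixList_greedyPath_succ (j : Fin N) (n : ℕ) :
    prefixList (G.greedyPath sel hsel j).1 (n + 1) =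
      sel j :: prefixList (G.greedyPath sel hsel (G.tgt (sel j))).1 n :=
  prefixList_succ _ n

theorem eq_or_lex_prefixList_greedyPath {r : G.Edge → G.Edge → Prop}
    (hmin : ∀ e, e = sel (G.src e) ∨ r (sel (G.src e)) e) {j : Fin N} {γ : List G.Edge}
    (hγ : G.IsPathFrom j γ) :
    γ = prefixList (G.greedyPath sel hsel j).1 γ.length ∨
      List.Lex r (prefixList (G.greedyPath sel hsel j).1 γ.length) γ := by
  induction γ generalizing j with
  | nil => exact .inl rfl
  | cons a γ ih =>
    obtain ⟨rfl, hγ'⟩ := G.isPathFrom_cons.1 hγ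
    rw [List.length_cons, prefixList_greedyPath_succ]
    rcases hmin a with h | h
    · rw [← h]
      exact (ih hγ').imp (congrArg _) .cons
    · exact .inr (.rel h)

variable (G)

theorem exists_lexLeast_infPath (r : G.Edge → G.Edge → Prop) [IsStrictOrder G.Edge r]
    (htot : ∀ a b, G.src a = G.src b → r a b ∨ a = b ∨ r b a) (hsrc : ∀ j, ∃ e, G.src e = j)
    (i : Fin N) :
    ∃ ω : G.InfPath i, ∀ γ, G.IsPathFrom i γ →
      γ = prefixList ω.1 γ.length ∨ List.Lex r (prefixList ω.1 γ.length) γ := by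
  obtain ⟨sel, hsel, hmin⟩ := G.exists_forall_eq_or_rel r htot hsrc
  exact ⟨G.greedyPath sel hsel i, fun γ hγ => eq_or_lex_prefixList_greedyPath hmin hγ⟩

end Greedy

namespace IsInvariant

variable {G} {E : Fin N → Set X} (hE : G.IsInvariant E)
include hE

theorem exists_src (j : Fin N) : ∃ e, G.src e = j := by
  obtain ⟨x, hx⟩ := hE.1 j
  rw [hE.2.2 j] at hx
  obtain ⟨e, he, -⟩ := mem_iUnion₂.1 hx
  exact ⟨e, he⟩

theorem image_subset (e : G.Edge) : G.g e '' E (G.tgt e) ⊆ E (G.src e) := by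
  rw [hE.2.2 (G.src e)]
  exact subset_biUnion_of_mem (u := fun e => G.g e '' E (G.tgt e)) (rfl : G.src e = G.src e)

theorem pathSet_subset {j : Fin N} {δ : List G.Edge} (hδ : G.IsPathFrom j δ) :
    G.pathSet E j δ ⊆ E j := by
  induction δ generalizing j with
  | nil => simp [pathSet, pathMap, pathTgt]
  | cons a δ ih =>
    obtain ⟨rfl, hδ'⟩ := G.isPathFrom_cons.1 hδ
    rw [G.pathSet_cons]
    exact (image_mono (ih hδ')).trans (hE.image_subset a)

theorem pathSet_append_subset {i : Fin N} {γ δ : List G.Edge} (h : G.IsPathFrom i (γ ++ δ)) :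
    G.pathSet E i (γ ++ δ) ⊆ G.pathSet E i γ := by
  rw [G.pathSet_append]
  exact image_mono (hE.pathSet_subset (G.isPathFrom_append.1 h).2)

theorem isCompact_pathSet (i : Fin N) (γ : List G.Edge) : IsCompact (G.pathSet E i γ) :=
  (hE.2.1 _).image (G.continuous_pathMap γ)

theorem exists_forall_mem_pathSet {i : Fin N} (ω : G.InfPath i) :
    ∃ x, ∀ n, x ∈ G.pathSet E i (prefixList ω.1 n) := by
  have hω := G.isPathFrom_prefixList ω.2.1 ω.2.2
  have hanti : ∀ n, G.pathSet E i (prefixList ω.1 (n + 1)) ⊆ G.pathSet E i (prefixList ω.1 n) :=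
    fun n => by
      have hn := hω (n + 1)
      rw [prefixList_succ'] at hn ⊢
      exact hE.pathSet_append_subset hn
  obtain ⟨x, hx⟩ := IsCompact.nonempty_iInter_of_sequence_nonempty_isCompact_isClosed
    (fun n => G.pathSet E i (prefixList ω.1 n)) hanti
    (fun n => (hE.1 _).image _) (hE.isCompact_pathSet _ _)
    fun n => (hE.isCompact_pathSet _ _).isClosed
  exact ⟨x, mem_iInter.1 hx⟩

theorem exists_tendsto_zero_dist_le :
    ∃ c : ℕ → ℝ, Tendsto c atTop (𝓝 0) ∧ ∀ i γ x y, x ∈ G.pathSet E i γ →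
      y ∈ G.pathSet E i γ → dist x y ≤ c γ.length := by
  obtain ⟨R, hR0, hR1, hr⟩ : ∃ R, 0 ≤ R ∧ R < 1 ∧ ∀ e, G.r e ≤ R := by
    cases isEmpty_or_nonempty G.Edge
    · exact ⟨0, le_rfl, one_pos, isEmptyElim⟩
    · obtain ⟨e₀, he₀⟩ := Finite.exists_max G.r
      exact ⟨_, (G.r_pos e₀).le, G.r_lt_one e₀, he₀⟩
  refine ⟨fun n => R ^ n * ∑ j, Metric.diam (E j),
    by simpa using (tendsto_pow_atTop_nhds_zero_of_lt_one hR0 hR1).mul_const _, ?_⟩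
  rintro i γ _ _ ⟨x, hx, rfl⟩ ⟨y, hy, rfl⟩
  calc _ ≤ R ^ γ.length * dist x y := G.dist_pathMap_le hr γ x y
    _ ≤ R ^ γ.length * ∑ j, Metric.diam (E j) := by
      gcongr
      exact (Metric.dist_le_diam_of_mem (hE.2.1 _).isBounded hx hy).trans
        (Finset.single_le_sum (fun j _ => Metric.diam_nonneg) (Finset.mem_univ _))

end IsInvariant

end GIFS

namespace OGIFS

variable {X : Type} [MetricSpace X] {N : ℕ} (G : OGIFS X N)

instance : IsStrictOrder G.Edge G.elt where
  irrefl := G.elt_irrefl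
  trans _ _ _ := G.elt_trans

instance : Std.Asymm G.PathLt :=
  inferInstanceAs (Std.Asymm (List.Lex G.elt))

theorem exists_isLowest (hsrc : ∀ j, ∃ e, G.src e = j) (i : Fin N) :
    ∃ ω : G.toGIFS.InfPath i, G.IsLowest i ω := by
  obtain ⟨ω, hω⟩ := G.exists_lexLeast_infPath G.elt G.elt_total hsrc i
  refine ⟨ω, fun n γ hγ hn => ?_⟩
  subst hn
  exact hω γ hγ

theorem exists_isHighest (hsrc : ∀ j, ∃ e, G.src e = j) (i : Fin N) :
    ∃ ω : G.toGIFS.InfPath i, G.IsHighest i ω := by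
  obtain ⟨ω, hω⟩ := G.exists_lexLeast_infPath (Function.swap G.elt)
    (fun a b h => (G.elt_total b a h.symm).imp_right (Or.imp_left Eq.symm)) hsrc i
  refine ⟨ω, fun n γ hγ hn => ?_⟩
  subst hn
  exact (hω γ hγ).imp_right fun h => h.of_swap_of_length_eq (length_prefixList _ _)

theorem exists_isHead {E : Fin N → Set X} (hE : G.toGIFS.IsInvariant E) (i : Fin N) :
    ∃ a, G.IsHead E i a := by
  obtain ⟨ω, hω⟩ := G.exists_isLowest hE.exists_src i
  obtain ⟨a, ha⟩ := hE.exists_forall_mem_pathSet ω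
  exact ⟨a, ω, hω, ha⟩

theorem exists_isTail {E : Fin N → Set X} (hE : G.toGIFS.IsInvariant E) (i : Fin N) :
    ∃ b, G.IsTail E i b := by
  obtain ⟨ω, hω⟩ := G.exists_isHighest hE.exists_src i
  obtain ⟨b, hb⟩ := hE.exists_forall_mem_pathSet ω
  exact ⟨b, ω, hω, hb⟩

def IsHighestPath (i : Fin N) (γ : List G.Edge) : Prop :=
  ¬ ∃ δ, G.toGIFS.IsPathFrom i δ ∧ δ.length = γ.length ∧ G.PathLt γ δ

def IsLowestPath (i : Fin N) (γ : List G.Edge) : Prop :=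
  ¬ ∃ δ, G.toGIFS.IsPathFrom i δ ∧ δ.length = γ.length ∧ G.PathLt δ γ

variable {G} {E : Fin N → Set X} {i : Fin N}

theorem IsHighest.isHighestPath {ω : G.toGIFS.InfPath i} (hω : G.IsHighest i ω) (n : ℕ) :
    G.IsHighestPath i (prefixList ω.1 n) := by
  rintro ⟨δ, hδ, hlen, hlt⟩
  rcases hω n δ hδ (hlen.trans (length_prefixList _ _)) with rfl | h
  · exact irrefl _ hlt
  · exact asymm hlt h

theorem IsLowest.isLowestPath {ω : G.toGIFS.InfPath i} (hω : G.IsLowest i ω) (n : ℕ) :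
    G.IsLowestPath i (prefixList ω.1 n) := by
  rintro ⟨δ, hδ, hlen, hlt⟩
  rcases hω n δ hδ (hlen.trans (length_prefixList _ _)) with rfl | h
  · exact irrefl _ hlt
  · exact asymm hlt h

theorem IsTail.mem_pathSet {b : X} {γ : List G.Edge} (hb : G.IsTail E i b)
    (hγ : G.toGIFS.IsPathFrom i γ) (hγh : G.IsHighestPath i γ) :
    b ∈ G.toGIFS.pathSet E i γ := by
  obtain ⟨ω, hω, hb⟩ := hb
  rcases hω γ.length γ hγ rfl with h | h
  · rw [h]
    exact hb _
  · exact absurd ⟨_, G.isPathFrom_prefixList ω.2.1 ω.2.2 _, length_prefixList _ _, h⟩ hγh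

theorem IsHead.mem_pathSet {a : X} {ω : List G.Edge} (ha : G.IsHead E i a)
    (hω : G.toGIFS.IsPathFrom i ω) (hωl : G.IsLowestPath i ω) :
    a ∈ G.toGIFS.pathSet E i ω := by
  obtain ⟨ω', hω', ha⟩ := ha
  rcases hω' ω.length ω hω rfl with h | h
  · rw [h]
    exact ha _
  · exact absurd ⟨_, G.isPathFrom_prefixList ω'.2.1 ω'.2.2 _, length_prefixList _ _, h⟩ hωl

theorem adjacent_cons {e f : G.Edge} {γ ω : List G.Edge} (hef : G.AdjacentEdges e f)
    (hγ : G.toGIFS.IsPathFrom (G.tgt e) γ) (hω : G.toGIFS.IsPathFrom (G.tgt f) ω)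
    (hlen : γ.length = ω.length) (hγh : G.IsHighestPath (G.tgt e) γ)
    (hωl : G.IsLowestPath (G.tgt f) ω) :
    G.Adjacent (G.src e) (e :: γ) (f :: ω) := by
  refine ⟨G.isPathFrom_cons.2 ⟨rfl, hγ⟩, G.isPathFrom_cons.2 ⟨(G.elt_src hef.1).symm, hω⟩,
    by simp [hlen], List.Lex.rel hef.1, ?_⟩
  rintro ⟨_ | ⟨c, δ⟩, hδ, hδl, hlt₁, hlt₂⟩
  · simp at hδl
  obtain ⟨-, hδ⟩ := G.isPathFrom_cons.1 hδ
  simp only [List.length_cons, add_left_inj] at hδl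
  cases hlt₁ with
  | rel hec =>
    cases hlt₂ with
    | rel hcf => exact hef.2 ⟨c, hec, hcf⟩
    | cons hlt => exact hωl ⟨δ, hδ, hδl.trans hlen, hlt⟩
  | cons hlt => exact hγh ⟨δ, hδ, hδl, hlt⟩

theorem Adjacent.exists_eq_append_cons (hsrc : ∀ j, ∃ e, G.src e = j) {γ ω : List G.Edge}
    (h : G.Adjacent i γ ω) :
    ∃ η e f γ' ω', γ = η ++ e :: γ' ∧ ω = η ++ f :: ω' ∧ G.AdjacentEdges e f ∧
      G.toGIFS.IsPathFrom (G.tgt e) γ' ∧ G.toGIFS.IsPathFrom (G.tgt f) ω' ∧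
      G.IsHighestPath (G.tgt e) γ' ∧ G.IsLowestPath (G.tgt f) ω' := by
  obtain ⟨hγ, hω, hlen, hlt, hno⟩ := h
  obtain ⟨η, e, f, γ', ω', rfl, rfl, hef, hlen'⟩ :=
    List.Lex.exists_eq_append_cons_of_length_eq hlt hlen
  rw [G.isPathFrom_append, G.isPathFrom_cons] at hγ hω
  obtain ⟨hη, he, hγ'⟩ := hγ
  obtain ⟨-, -, hω'⟩ := hω
  have hbetween : ∀ c δ, G.src c = G.src e → G.toGIFS.IsPathFrom (G.tgt c) δ →
      δ.length = γ'.length → List.Lex G.elt (e :: γ') (c :: δ) →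
      ¬ List.Lex G.elt (c :: δ) (f :: ω') := by
    intro c δ hc hδ hδl h₁ h₂
    refine hno ⟨η ++ c :: δ, ?_, by simp [hδl], List.Lex.append_left _ h₁ η,
      List.Lex.append_left _ h₂ η⟩
    rw [G.isPathFrom_append, G.isPathFrom_cons]
    exact ⟨hη, hc.trans he, hδ⟩
  refine ⟨η, e, f, γ', ω', rfl, rfl, ⟨hef, ?_⟩, hγ', hω', ?_, ?_⟩
  · rintro ⟨c, hec, hcf⟩
    obtain ⟨δ, hδ, hδl⟩ := G.exists_isPathFrom_length hsrc (G.tgt c) γ'.length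
    exact hbetween c δ (G.elt_src hec).symm hδ hδl (.rel hec) (.rel hcf)
  · rintro ⟨δ, hδ, hδl, hlt⟩
    exact hbetween e δ rfl hδ hδl (.cons hlt) (.rel hef)
  · rintro ⟨δ, hδ, hδl, hlt⟩
    exact hbetween f δ (G.elt_src hef).symm hδ (hδl.trans hlen'.symm) (.rel hef) (.cons hlt)

theorem IsLinear.chainCondition (hE : G.toGIFS.IsInvariant E) (hlin : G.IsLinear E) :
    G.ChainCondition E := by
  rintro e f hef b a ⟨ωt, hωt, hb⟩ ⟨ωh, hωh, ha⟩
  obtain ⟨c, hc, hdist⟩ := hE.exists_tendsto_zero_dist_le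
  have hclose : ∀ n, dist (G.g e b) (G.g f a) ≤ 2 * c (n + 1) := by
    intro n
    obtain ⟨z, hze, hzf⟩ := hlin _ _ _ (adjacent_cons hef
      (G.isPathFrom_prefixList ωt.2.1 ωt.2.2 n) (G.isPathFrom_prefixList ωh.2.1 ωh.2.2 n)
      (by simp only [length_prefixList]) (hωt.isHighestPath n) (hωh.isLowestPath n))
    have h₁ := hdist _ _ _ _ (G.pathSet_cons E _ e _ ▸ mem_image_of_mem _ (hb n)) hze
    have h₂ := hdist _ _ _ _ hzf (G.pathSet_cons E _ f _ ▸ mem_image_of_mem _ (ha n))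
    simp only [List.length_cons, length_prefixList] at h₁ h₂
    linarith [dist_triangle (G.g e b) z (G.g f a)]
  have hlim : Tendsto (fun n => 2 * c (n + 1)) atTop (𝓝 0) := by
    simpa using (hc.comp (tendsto_add_atTop_nat 1)).const_mul 2
  exact dist_le_zero.1 (ge_of_tendsto' hlim hclose)

theorem ChainCondition.isLinear (hE : G.toGIFS.IsInvariant E) (hch : G.ChainCondition E) :
    G.IsLinear E := by
  rintro i _ _ hadj
  obtain ⟨η, e, f, γ, ω, rfl, rfl, hef, hγ, hω, hγh, hωl⟩ :=
    hadj.exists_eq_append_cons hE.exists_src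
  obtain ⟨b, hb⟩ := G.exists_isTail hE (G.tgt e)
  obtain ⟨a, ha⟩ := G.exists_isHead hE (G.tgt f)
  refine ⟨G.pathMap η (G.g e b), ?_, ?_⟩ <;> rw [G.pathSet_append, G.pathSet_cons]
  · exact mem_image_of_mem _ (mem_image_of_mem _ (hb.mem_pathSet hγ hγh))
  · rw [hch e f hef b a hb ha]
    exact mem_image_of_mem _ (mem_image_of_mem _ (ha.mem_pathSet hω hωl))

end OGIFS

/-- **Theorem 1.2.** An ordered GIFS is a linear GIFS if and only if it satisfies
the chain condition. -/
theorem linear_iff_chainCondition {d N : ℕ}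
    (G : OGIFS (EuclideanSpace ℝ (Fin d)) N) (E : Fin N → Set (EuclideanSpace ℝ (Fin d)))
    (hE : G.toGIFS.IsInvariant E) :
    G.IsLinear E ↔ G.ChainCondition E :=
  ⟨OGIFS.IsLinear.chainCondition hE, OGIFS.ChainCondition.isLinear hE⟩
end

section
/- An ordered IFS {S_1,…,S_N} of contracting similitudes on ℝ^d with invariant set K is a linear IFS if and only if S_{i+1}(Fix(S_1)) = S_i(Fix(S_N)) for every i = 1,2,…,N−1, where Fix(S) denotes the unique fixed point of the contraction S. -/
open MeasureTheory Set

noncomputable section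
/-- Composition `S_{ω₁} ∘ ⋯ ∘ S_{ω_k}` along a finite word. -/
def wordMap {α X : Type} (S : α → X → X) (ω : List α) : X → X :=
  ω.foldr (fun a f => S a ∘ f) id

/-- Two same-length words over `Fin N` adjacent (consecutive) in the dictionary order. -/
def AdjacentWords {N : ℕ} (ω γ : List (Fin N)) : Prop :=
  ω.length = γ.length ∧ List.Lex (· < ·) ω γ ∧
  ¬ ∃ η : List (Fin N), η.length = ω.length ∧ List.Lex (· < ·) ω η ∧ List.Lex (· < ·) η γ

/-! Adjacent words of equal length are exactly `τ a N…N` and `τ (a+1) 1…1`. If Hata's condition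
holds, both cylinders contain `S_τ (S_a (Fix S_N)) = S_τ (S_{a+1} (Fix S_1))`. Conversely, the
cylinders `S_a S_N^k K` and `S_{a+1} S_1^k K` shrink to `S_a (Fix S_N)` and `S_{a+1} (Fix S_1)`
as `k → ∞`, so if they always meet, these two points coincide. -/

open Function Filter Topology Bornology

section WordMap

variable {α X : Type} (S : α → X → X)

@[simp]
theorem wordMap_cons (a : α) (l : List α) : wordMap S (a :: l) = S a ∘ wordMap S l := rfl

@[simp]
theorem wordMap_append (l₁ l₂ : List α) : wordMap S (l₁ ++ l₂) = wordMap S l₁ ∘ wordMap S l₂ := by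
  induction l₁ with
  | nil => rfl
  | cons a l₁ ih => rw [List.cons_append, wordMap_cons, wordMap_cons, ih, comp_assoc]

@[simp]
theorem wordMap_replicate (k : ℕ) (a : α) : wordMap S (List.replicate k a) = (S a)^[k] := by
  induction k with
  | zero => rfl
  | succ k ih => rw [List.replicate_succ, wordMap_cons, ih, iterate_succ']

end WordMap

namespace List

theorem Lex.exists_eq_append_cons {α : Type*} {r : α → α → Prop} {l₁ l₂ : List α}
    (h : Lex r l₁ l₂) (hlen : l₁.length = l₂.length) :
    ∃ τ a b s t, l₁ = τ ++ a :: s ∧ l₂ = τ ++ b :: t ∧ r a b ∧ s.length = t.length := by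
  induction h with
  | nil => simp at hlen
  | @cons c l₁ l₂ _ ih =>
    obtain ⟨τ, a, b, s, t, rfl, rfl, hab, hst⟩ := ih (by simpa using hlen)
    exact ⟨c :: τ, a, b, s, t, rfl, rfl, hab, hst⟩
  | @rel a l₁ b l₂ hab => exact ⟨[], a, b, l₁, l₂, rfl, rfl, hab, by simpa using hlen⟩

variable {α : Type*} [LinearOrder α] {t : α}

theorem not_replicate_lex_of_isTop (ht : IsTop t) (l : List α) :
    ¬ Lex (· < ·) (replicate l.length t) l := by
  induction l with
  | nil => exact not_lex_nil
  | cons a l ih =>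
    intro h
    cases h with
    | cons h => exact ih h
    | rel h => exact (ht a).not_gt h

theorem not_lex_replicate_of_isBot (ht : IsBot t) (l : List α) :
    ¬ Lex (· < ·) l (replicate l.length t) := by
  induction l with
  | nil => exact not_lex_nil
  | cons a l ih =>
    intro h
    cases h with
    | cons h => exact ih h
    | rel h => exact (ht a).not_gt h

theorem lex_replicate_of_isTop (ht : IsTop t) {l : List α} (hl : l ≠ replicate l.length t) :
    Lex (· < ·) l (replicate l.length t) := by
  induction l with
  | nil => exact absurd rfl hl
  | cons a l ih =>
    rcases (ht a).lt_or_eq with h | rfl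
    · exact Lex.rel h
    · exact Lex.cons (ih fun h => hl (by rw [length_cons, replicate_succ, ← h]))

theorem replicate_lex_of_isBot (ht : IsBot t) {l : List α} (hl : l ≠ replicate l.length t) :
    Lex (· < ·) (replicate l.length t) l := by
  induction l with
  | nil => exact absurd rfl hl
  | cons a l ih =>
    rcases (ht a).lt_or_eq with h | rfl
    · exact Lex.rel h
    · exact Lex.cons (ih fun h => hl (by rw [length_cons, replicate_succ, ← h]))

end List

section AdjacentWords

open List

variable {N : ℕ} {lo hi : Fin N}

theorem adjacentWords_cons_replicate (hlo : IsBot lo) (hhi : IsTop hi) {a b : Fin N}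
    (hab : a ⋖ b) (k : ℕ) : AdjacentWords (a :: replicate k hi) (b :: replicate k lo) := by
  refine ⟨by simp, Lex.rel hab.lt, ?_⟩
  rintro ⟨_ | ⟨c, η⟩, hlen, h₁, h₂⟩
  · exact not_lex_nil h₁
  obtain rfl : η.length = k := by simpa using hlen
  cases h₁ with
  | cons h₁ => exact not_replicate_lex_of_isTop hhi η h₁
  | rel hac =>
    cases h₂ with
    | cons h₂ => exact not_lex_replicate_of_isBot hlo η h₂
    | rel hcb => exact hab.2 hac hcb

theorem AdjacentWords.exists_eq_append (hlo : IsBot lo) (hhi : IsTop hi) {ω γ : List (Fin N)}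
    (h : AdjacentWords ω γ) :
    ∃ τ a b k, a ⋖ b ∧ ω = τ ++ a :: replicate k hi ∧ γ = τ ++ b :: replicate k lo := by
  obtain ⟨hlen, hlex, hbetween⟩ := h
  obtain ⟨τ, a, b, s, t, rfl, rfl, hab, hst⟩ := hlex.exists_eq_append_cons hlen
  have hs : s = replicate s.length hi := by
    by_contra hs
    exact hbetween ⟨τ ++ a :: replicate s.length hi, by simp,
      Lex.append_left _ (Lex.cons (lex_replicate_of_isTop hhi hs)) τ,
      Lex.append_left _ (Lex.rel hab) τ⟩
  have ht : t = replicate t.length lo := by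
    by_contra ht
    exact hbetween ⟨τ ++ b :: replicate t.length lo, by simp [hst],
      Lex.append_left _ (Lex.rel hab) τ,
      Lex.append_left _ (Lex.cons (replicate_lex_of_isBot hlo ht)) τ⟩
  have hcov : a ⋖ b := ⟨hab, fun c hac hcb => hbetween ⟨τ ++ c :: s, by simp,
      Lex.append_left _ (Lex.rel hac) τ, Lex.append_left _ (Lex.rel hcb) τ⟩⟩
  exact ⟨τ, a, b, s.length, hcov, by rw [← hs], by rw [hst, ← ht]⟩

end AdjacentWords

namespace ContractingWith

variable {X Y : Type*} [MetricSpace X] [TopologicalSpace Y] {c : NNReal} {f : X → X} {p : X}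

theorem tendsto_iterate_of_isBounded (hf : ContractingWith c f) (hp : IsFixedPt f p)
    {s : Set X} (hs : IsBounded s) {x : ℕ → X} (hx : ∀ k, x k ∈ s) :
    Tendsto (fun k => f^[k] (x k)) atTop (𝓝 p) := by
  obtain ⟨R, hR⟩ := hs.subset_closedBall p
  have hc : (c : ℝ) < 1 := hf.1
  have hlim : Tendsto (fun k => (c : ℝ) ^ k * R) atTop (𝓝 0) := by
    simpa using (tendsto_pow_atTop_nhds_zero_of_lt_one c.2 hc).mul_const R
  refine tendsto_iff_dist_tendsto_zero.2 (squeeze_zero (fun _ => dist_nonneg) (fun k => ?_) hlim)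
  calc dist (f^[k] (x k)) p = dist (f^[k] (x k)) (f^[k] p) := by rw [(hp.iterate k).eq]
    _ ≤ c ^ k * dist (x k) p := by exact_mod_cast (hf.2.iterate k).dist_le_mul _ _
    _ ≤ c ^ k * R := by gcongr; exact hR (hx k)

theorem tendsto_of_forall_mem_image_comp_iterate (hf : ContractingWith c f) (hp : IsFixedPt f p)
    {g : X → Y} (hg : Continuous g) {s : Set X} (hs : IsBounded s) {z : ℕ → Y}
    (hz : ∀ k, z k ∈ (g ∘ f^[k]) '' s) : Tendsto z atTop (𝓝 (g p)) := by
  choose x hxs hxz using hz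
  rw [show z = fun k => g (f^[k] (x k)) from funext fun k => (hxz k).symm]
  exact (hg.tendsto p).comp (hf.tendsto_iterate_of_isBounded hp hs hxs)

theorem mem_of_isFixedPt_of_mapsTo (hf : ContractingWith c f) (hp : IsFixedPt f p)
    {s : Set X} (hs : IsClosed s) (hne : s.Nonempty) (hmaps : MapsTo f s s) : p ∈ s := by
  obtain ⟨x, hx⟩ := hne
  exact hs.mem_of_tendsto (hf.tendsto_iterate_of_isBounded hp isBounded_singleton (x := fun _ => x)
    fun _ => rfl) (Eventually.of_forall fun k => hmaps.iterate k hx)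

end ContractingWith

/-- **Corollary 4.2 (Hata's condition).** An ordered IFS `{S_1, …, S_N}` is a linear
IFS if and only if `S_{i+1}(Fix(S_1)) = S_i(Fix(S_N))` for `i = 1, …, N-1`. -/
theorem orderedIFS_linear_iff_fix {d N : ℕ} (hN : 0 < N)
    (S : Fin N → EuclideanSpace ℝ (Fin d) → EuclideanSpace ℝ (Fin d)) (r : Fin N → ℝ)
    (hr : ∀ i, 0 < r i ∧ r i < 1)
    (hS : ∀ i x y, dist (S i x) (S i y) = r i * dist x y)
    (K : Set (EuclideanSpace ℝ (Fin d))) (hK : K.Nonempty) (hKc : IsCompact K)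
    (hKinv : K = ⋃ i, S i '' K)
    (p q : EuclideanSpace ℝ (Fin d)) (hp : S ⟨0, hN⟩ p = p) (hq : S ⟨N - 1, Nat.sub_lt hN Nat.one_pos⟩ q = q) :
    (∀ ω γ : List (Fin N), AdjacentWords ω γ →
        ((wordMap S ω '' K) ∩ (wordMap S γ '' K)).Nonempty) ↔
    (∀ i : Fin N, ∀ h : i.val + 1 < N, S ⟨i.val + 1, h⟩ p = S i q) := by
  set lo : Fin N := ⟨0, hN⟩
  set hi : Fin N := ⟨N - 1, Nat.sub_lt hN Nat.one_pos⟩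
  have hlo : IsBot lo := fun _ => Nat.zero_le _
  have hhi : IsTop hi := fun i => Nat.le_sub_one_of_lt i.isLt
  have hcontr : ∀ i, ContractingWith ⟨r i, (hr i).1.le⟩ (S i) := fun i =>
    ⟨(hr i).2, LipschitzWith.of_dist_le_mul fun x y => (hS i x y).le⟩
  have hmaps : ∀ i, MapsTo (S i) K K := fun i x hx => by
    rw [hKinv]; exact mem_iUnion_of_mem i (mem_image_of_mem _ hx)
  have hpK : p ∈ K := (hcontr lo).mem_of_isFixedPt_of_mapsTo hp hKc.isClosed hK (hmaps lo)
  have hqK : q ∈ K := (hcontr hi).mem_of_isFixedPt_of_mapsTo hq hKc.isClosed hK (hmaps hi)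
  constructor
  · intro hlin i hi1
    have hcov : i ⋖ ⟨i + 1, hi1⟩ := Fin.covBy_iff.2 (Order.covBy_add_one _)
    choose z hz using fun k => hlin _ _ (adjacentWords_cons_replicate hlo hhi hcov k)
    simp only [wordMap_cons, wordMap_replicate] at hz
    exact tendsto_nhds_unique
      ((hcontr lo).tendsto_of_forall_mem_image_comp_iterate hp (hcontr _).2.continuous
        hKc.isBounded fun k => (hz k).2)
      ((hcontr hi).tendsto_of_forall_mem_image_comp_iterate hq (hcontr i).2.continuous
        hKc.isBounded fun k => (hz k).1)
  · intro hfix ω γ hadj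
    obtain ⟨τ, a, b, k, hab, rfl, rfl⟩ := hadj.exists_eq_append hlo hhi
    have hb : (a : ℕ) + 1 = b := Order.covBy_iff_add_one_eq.1 hab.coe_fin
    have hba : S b p = S a q :=
      (congrArg (S · p) (Fin.ext hb.symm)).trans (hfix a (hb ▸ b.isLt))
    refine ⟨wordMap S τ (S a q), ⟨q, hqK, ?_⟩, ⟨p, hpK, ?_⟩⟩ <;>
      simp [iterate_fixed hp, iterate_fixed hq, hba]
end
end
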